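/- Let R be a commutative domain with fraction field K, let N ≥ 1, and let f ∈ K[t_1, …, t_N] be a polynomial such that f(x) ∈ R for every x ∈ R^N (an integer-valued polynomial on R). Let E_R(f) : R^N → R denote the induced function. Then fdeg(E_R(f)) ≤ deg(f). If moreover R has characteristic 0 and f ≠ 0, then fdeg(E_R(f)) = deg(f). -/

import Mathlib

/-- The difference operator `Δ_a` sending `f` to `x ↦ f (x + a) - f x`. -/
def disc {A B : Type*} [AddCommGroup A] [AddCommGroup B] (a : A) (f : A → B) : A → B :=
  fun x => f (x + a) - f x

/-- Iterated difference operator `Δ_{a_1} ⋯ Δ_{a_k} f` along a list `[a_1, …, a_k]`. -/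
def multiDisc {A B : Type*} [AddCommGroup A] [AddCommGroup B] : List A → (A → B) → (A → B)
  | [], f => f
  | a :: l, f => disc a (multiDisc l f)

/-- `FdegLE f d` says that the functional degree of `f` is at most `d`, i.e. all
`(d+1)`-fold iterated differences of `f` vanish. -/
def FdegLE {A B : Type*} [AddCommGroup A] [AddCommGroup B] (f : A → B) (d : ℕ) : Prop :=
  ∀ l : List A, l.length = d + 1 → multiDisc l f = 0

/-- The functional degree `fdeg f ∈ {-∞} ∪ ℕ ∪ {∞}` of `f : A → B`, namely
the supremum of the lengths of lists `[a_1, …, a_k]` with `Δ_{a_1} ⋯ Δ_{a_k} f ≠ 0`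
(with `sup ∅ = ⊥ = -∞`). -/
noncomputable def fdeg {A B : Type*} [AddCommGroup A] [AddCommGroup B] (f : A → B) :
    WithBot ℕ∞ :=
  sSup {d : WithBot ℕ∞ | ∃ l : List A, multiDisc l f ≠ 0 ∧ (l.length : WithBot ℕ∞) = d}

/-! Translating by `a` lowers degrees: every monomial of `p(X + a) - p(X)` has degree
`< deg p`, so `deg p + 1` differences of the induced function vanish. Moreover
`p(X + eᵢ) - p(X)` agrees with `∂p/∂Xᵢ` in degree `deg p - 1`, so if `X^m` is a monomial of top
degree in `p`, taking `mᵢ` differences in each direction `eᵢ` leaves the constant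
`(∏ mᵢ!) · coeff m p`, which is nonzero in characteristic `0`. The degree bounds for `p`,
for `p(X + a) - p(X)` and for its first-order Taylor remainder are proved jointly on monomials,
since the product rule for each of the last two involves the others. -/

namespace MvPolynomial

variable {σ S : Type*} [CommRing S]

-- Indexed by `ℤ` so that the shifted bounds `n - 1`, `n - 2` below do not truncate;
-- for `n ≤ 0` it is `⊥`.
variable (σ S) in
noncomputable def degreeLT (n : ℤ) : Submodule S (MvPolynomial σ S) :=
  restrictSupport S {m | (m.degree : ℤ) < n}

section degreeLT

variable {p q : MvPolynomial σ S} {n x y : ℤ}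

theorem mem_degreeLT : p ∈ degreeLT σ S n ↔ ∀ m ∈ p.support, (m.degree : ℤ) < n :=
  mem_restrictSupport_iff S

theorem coeff_eq_zero_of_mem_degreeLT (hp : p ∈ degreeLT σ S n) {m : σ →₀ ℕ}
    (hm : n ≤ m.degree) : coeff m p = 0 :=
  notMem_support_iff.1 fun h => (mem_degreeLT.1 hp m h).not_ge hm

theorem eq_zero_of_mem_degreeLT (hp : p ∈ degreeLT σ S n) (hn : n ≤ 0) : p = 0 :=
  ext _ _ fun _ => coeff_eq_zero_of_mem_degreeLT hp (hn.trans (Int.natCast_nonneg _))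

theorem monomial_mem_degreeLT {m : σ →₀ ℕ} (hp : p ∈ degreeLT σ S n)
    (hm : m ∈ p.support) (c : S) : monomial m c ∈ degreeLT σ S n :=
  (monomial_mem_restrictSupport S).2 (.inl (mem_degreeLT.1 hp m hm))

theorem mem_degreeLT_iff_totalDegree_le {d : ℕ} :
    p ∈ degreeLT σ S (d + 1) ↔ p.totalDegree ≤ d := by
  rw [mem_degreeLT, totalDegree, Finset.sup_le_iff]
  exact forall₂_congr fun m _ => by
    change _ ↔ m.degree ≤ d
    omega

theorem C_mem_degreeLT (c : S) : C c ∈ degreeLT σ S 1 :=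
  (monomial_mem_restrictSupport S).2 (.inl (by simp))

theorem X_mem_degreeLT (i : σ) : X i ∈ degreeLT σ S 2 :=
  (monomial_mem_restrictSupport S).2 (.inl (by simp))

theorem mul_mem_degreeLT (hp : p ∈ degreeLT σ S x) (hq : q ∈ degreeLT σ S y)
    (h : x + y ≤ n + 1) : p * q ∈ degreeLT σ S n := by
  classical
  rw [mem_degreeLT] at *
  intro m hm
  obtain ⟨a, ha, b, hb, rfl⟩ := Finset.mem_add.1 (support_mul p q hm)
  have := hp a ha
  have := hq b hb
  rw [map_add]
  push_cast
  omega

theorem mem_degreeLT_of_mul_X (i : σ) (h : p * X i ∈ degreeLT σ S n) :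
    p ∈ degreeLT σ S (n - 1) := by
  rw [mem_degreeLT] at *
  intro m hm
  have := h (m + Finsupp.single i 1) (by simpa using hm)
  rw [map_add, Finsupp.degree_single] at this
  push_cast at this
  omega

end degreeLT

noncomputable def translate (a : σ → S) : MvPolynomial σ S →ₐ[S] MvPolynomial σ S :=
  bind₁ fun j => X j + C (a j)

theorem eval_translate (x a : σ → S) (p : MvPolynomial σ S) :
    eval x (translate a p) = eval (x + a) p := by
  change eval₂Hom _ x (bind₁ _ p) = _
  rw [eval₂Hom_bind₁]
  have : (fun i => eval x (X i + C (a i))) = x + a := by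
    funext i
    simp
  exact congrArg (eval · p) this

noncomputable def dirDeriv (a : σ → S) : Derivation S (MvPolynomial σ S) (MvPolynomial σ S) :=
  mkDerivation S fun j => C (a j)

section Taylor

variable (a : σ → S)

def TaylorDegreeLT (n : ℤ) (p : MvPolynomial σ S) : Prop :=
  p ∈ degreeLT σ S n ∧ translate a p - p ∈ degreeLT σ S (n - 1) ∧
    translate a p - p - dirDeriv a p ∈ degreeLT σ S (n - 2)

variable {a} {p q : MvPolynomial σ S} {n x y : ℤ}

theorem TaylorDegreeLT.zero (n : ℤ) : TaylorDegreeLT a n (0 : MvPolynomial σ S) := by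
  simp only [TaylorDegreeLT, map_zero, sub_zero, zero_mem, and_self]

theorem TaylorDegreeLT.add (hp : TaylorDegreeLT a n p) (hq : TaylorDegreeLT a n q) :
    TaylorDegreeLT a n (p + q) := by
  obtain ⟨hp₀, hp₁, hp₂⟩ := hp
  obtain ⟨hq₀, hq₁, hq₂⟩ := hq
  refine ⟨add_mem hp₀ hq₀, ?_, ?_⟩
  · convert add_mem hp₁ hq₁ using 1
    rw [map_add]
    abel
  · convert add_mem hp₂ hq₂ using 1
    rw [map_add, map_add]
    abel

theorem TaylorDegreeLT.mul (hp : TaylorDegreeLT a x p) (hq : TaylorDegreeLT a y q) :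
    TaylorDegreeLT a (x + y - 1) (p * q) := by
  obtain ⟨hp₀, hp₁, hp₂⟩ := hp
  obtain ⟨hq₀, hq₁, hq₂⟩ := hq
  set T := translate a
  set D := dirDeriv a
  have hdiff : T (p * q) - p * q = (T p - p) * q + p * (T q - q) + (T p - p) * (T q - q) := by
    rw [map_mul]
    ring
  have hrem : T (p * q) - p * q - D (p * q) =
      (T p - p - D p) * q + p * (T q - q - D q) + (T p - p) * (T q - q) := by
    rw [map_mul, Derivation.leibniz, smul_eq_mul, smul_eq_mul]
    ring
  refine ⟨mul_mem_degreeLT hp₀ hq₀ (by omega), ?_, ?_⟩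
  · rw [hdiff]
    exact add_mem (add_mem (mul_mem_degreeLT hp₁ hq₀ (by omega))
      (mul_mem_degreeLT hp₀ hq₁ (by omega))) (mul_mem_degreeLT hp₁ hq₁ (by omega))
  · rw [hrem]
    exact add_mem (add_mem (mul_mem_degreeLT hp₂ hq₀ (by omega))
      (mul_mem_degreeLT hp₀ hq₂ (by omega))) (mul_mem_degreeLT hp₁ hq₁ (by omega))

theorem taylorDegreeLT_C {c : S} (hc : C c ∈ degreeLT σ S n) : TaylorDegreeLT a n (C c) := by
  have hT : translate a (C c) = C c := (translate a).commutes c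
  have hD : dirDeriv a (C c) = 0 := (dirDeriv a).map_algebraMap c
  simp only [TaylorDegreeLT, hT, hD, sub_self, zero_mem, and_true, hc]

theorem taylorDegreeLT_X (i : σ) : TaylorDegreeLT a 2 (X i) := by
  have hT : translate a (X i) = X i + C (a i) := bind₁_X_right _ i
  refine ⟨X_mem_degreeLT i, ?_, ?_⟩ <;>
    simp only [hT, dirDeriv, mkDerivation_X, add_sub_cancel_left, sub_self, zero_mem]
  exact C_mem_degreeLT _

variable (a) in
theorem taylorDegreeLT_of_mem_degreeLT (hp : p ∈ degreeLT σ S n) : TaylorDegreeLT a n p := by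
  have hmonomial (m : σ →₀ ℕ) (c : S) :
      ∀ n, monomial m c ∈ degreeLT σ S n → TaylorDegreeLT a n (monomial m c) := by
    refine induction_on_monomial
      (motive := fun q => ∀ n, q ∈ degreeLT σ S n → TaylorDegreeLT a n q)
      (fun c n hc => taylorDegreeLT_C hc) (fun q i hq n hqX => ?_) m c
    convert (hq (n - 1) (mem_degreeLT_of_mul_X i hqX)).mul (taylorDegreeLT_X i) using 1
    ring
  rw [p.as_sum]
  exact Finset.sum_induction _ _ (fun _ _ => TaylorDegreeLT.add) (.zero n)
    fun m hm => hmonomial m _ n (monomial_mem_degreeLT hp hm _)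

end Taylor

variable {p : MvPolynomial σ S} {n : ℤ}

theorem translate_sub_self_mem_degreeLT (a : σ → S) (hp : p ∈ degreeLT σ S n) :
    translate a p - p ∈ degreeLT σ S (n - 1) :=
  (taylorDegreeLT_of_mem_degreeLT a hp).2.1

theorem dirDeriv_single [DecidableEq σ] (i : σ) : dirDeriv (Pi.single i 1) = pderiv (R := S) i :=
  derivation_ext fun j => by
    rw [dirDeriv, mkDerivation_X, pderiv_X]
    by_cases h : j = i <;> simp [h]

theorem coeff_translate_single_sub_self [DecidableEq σ] (i : σ) {m : σ →₀ ℕ}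
    (hp : p ∈ degreeLT σ S (m.degree + 2)) :
    coeff m (translate (Pi.single i 1) p - p) = coeff (m + Finsupp.single i 1) p * (m i + 1) := by
  have h := coeff_eq_zero_of_mem_degreeLT (m := m)
    (taylorDegreeLT_of_mem_degreeLT (Pi.single i 1) hp).2.2 (by omega)
  rwa [coeff_sub, dirDeriv_single, coeff_pderiv, sub_eq_zero] at h

end MvPolynomial

section fdeg

variable {A B B' : Type*} [AddCommGroup A] [AddCommGroup B] [AddCommGroup B']

theorem multiDisc_append (l₁ l₂ : List A) (f : A → B) :
    multiDisc (l₁ ++ l₂) f = multiDisc l₁ (multiDisc l₂ f) := by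
  induction l₁ with
  | nil => rfl
  | cons a l ih => rw [List.cons_append, multiDisc, ih, multiDisc]

theorem multiDisc_comp_addMonoidHom (π : B →+ B') (l : List A) (f : A → B) :
    multiDisc l (π ∘ f) = π ∘ multiDisc l f := by
  induction l with
  | nil => rfl
  | cons a l ih =>
    funext x
    simp [multiDisc, disc, ih]

theorem fdeg_comp_addMonoidHom_of_injective (π : B →+ B') (hπ : Function.Injective π)
    (f : A → B) : fdeg (π ∘ f) = fdeg f := by
  have hzero (h : A → B) : π ∘ h = 0 ↔ h = 0 := by
    refine ⟨fun hh => funext fun x => hπ ?_, fun hh => ?_⟩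
    · simpa using congrFun hh x
    · subst hh
      funext x
      simp
  simp only [fdeg, multiDisc_comp_addMonoidHom, ne_eq, hzero]

theorem fdeg_le_of_forall_length_le {f : A → B} {d : ℕ}
    (h : ∀ l : List A, multiDisc l f ≠ 0 → l.length ≤ d) :
    fdeg f ≤ ((d : ℕ∞) : WithBot ℕ∞) :=
  sSup_le <| by
    rintro _ ⟨l, hl, rfl⟩
    exact_mod_cast h l hl

theorem length_le_fdeg {f : A → B} {l : List A} (h : multiDisc l f ≠ 0) :
    ((l.length : ℕ∞) : WithBot ℕ∞) ≤ fdeg f :=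
  le_sSup ⟨l, h, by simp⟩

end fdeg

namespace MvPolynomial

variable {σ R K : Type*} [CommRing R] [CommRing K] [Algebra R K]

variable (R) in
noncomputable def evalRestrict (p : MvPolynomial σ K) : (σ → R) → K :=
  fun x => eval (fun i => algebraMap R K (x i)) p

theorem disc_evalRestrict (a : σ → R) (p : MvPolynomial σ K) :
    disc a (evalRestrict R p) =
      evalRestrict R (translate (fun i => algebraMap R K (a i)) p - p) := by
  funext x
  simp only [disc, evalRestrict, map_sub, eval_translate, Pi.add_apply, map_add]
  rfl

theorem exists_multiDisc_evalRestrict_eq (l : List (σ → R)) {n : ℤ} {p : MvPolynomial σ K}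
    (hp : p ∈ degreeLT σ K n) :
    ∃ q ∈ degreeLT σ K (n - l.length), multiDisc l (evalRestrict R p) = evalRestrict R q := by
  induction l with
  | nil => exact ⟨p, by simpa using hp, rfl⟩
  | cons a l ih =>
    obtain ⟨q, hq, hl⟩ := ih
    refine ⟨_, ?_, by rw [multiDisc, hl, disc_evalRestrict]⟩
    convert translate_sub_self_mem_degreeLT _ hq using 2
    simp only [List.length_cons]
    push_cast
    ring

theorem multiDisc_evalRestrict_eq_zero {l : List (σ → R)} {n : ℤ} {p : MvPolynomial σ K}
    (hp : p ∈ degreeLT σ K n) (hl : n ≤ l.length) : multiDisc l (evalRestrict R p) = 0 := by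
  obtain ⟨q, hq, h⟩ := exists_multiDisc_evalRestrict_eq l hp
  rw [h, eq_zero_of_mem_degreeLT hq (by omega)]
  funext x
  simp [evalRestrict]

theorem fdeg_evalRestrict_le (p : MvPolynomial σ K) :
    fdeg (evalRestrict R p) ≤ ((p.totalDegree : ℕ∞) : WithBot ℕ∞) :=
  fdeg_le_of_forall_length_le fun l hl => by
    by_contra! h
    exact hl (multiDisc_evalRestrict_eq_zero (mem_degreeLT_iff_totalDegree_le.2 le_rfl)
      (by omega))

theorem exists_multiDisc_evalRestrict_eq_const [DecidableEq σ] (m : σ →₀ ℕ)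
    {p : MvPolynomial σ K} (hp : p ∈ degreeLT σ K (m.degree + 1)) :
    ∃ l : List (σ → R), l.length = m.degree ∧ ∃ c : ℕ, c ≠ 0 ∧
      multiDisc l (evalRestrict R p) = fun _ => c * coeff m p := by
  induction hm : m.degree generalizing m p with
  | zero =>
    rw [Finsupp.degree_eq_zero_iff] at hm
    subst hm
    have hC : p = C (coeff 0 p) := totalDegree_eq_zero_iff_eq_C.1
      (Nat.le_zero.1 (mem_degreeLT_iff_totalDegree_le.1 (by simpa using hp)))
    refine ⟨[], rfl, 1, one_ne_zero, ?_⟩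
    funext x
    rw [multiDisc, evalRestrict, hC]
    simp
  | succ n ih =>
    obtain ⟨i, hi⟩ : ∃ i, m i ≠ 0 := by
      by_contra! h
      simp [show m = 0 from Finsupp.ext h] at hm
    obtain ⟨m, rfl⟩ : ∃ m', m = m' + Finsupp.single i 1 :=
      ⟨m - Finsupp.single i 1, (tsub_add_cancel_of_le (by simpa [Nat.one_le_iff_ne_zero])).symm⟩
    rw [map_add, Finsupp.degree_single] at hm hp
    have hq : translate (Pi.single i 1) p - p ∈ degreeLT σ K (m.degree + 1) := by
      convert translate_sub_self_mem_degreeLT _ hp using 2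
      push_cast
      ring
    obtain ⟨l, hl, c, hc, hlq⟩ := ih m hq (by omega)
    have hdir : (fun j => algebraMap R K ((Pi.single i 1 : σ → R) j)) = Pi.single i 1 := by
      funext j
      by_cases h : j = i <;> simp [h]
    refine ⟨l ++ [Pi.single i 1], by simp [hl], c * (m i + 1), by positivity, ?_⟩
    rw [multiDisc_append, multiDisc, multiDisc, disc_evalRestrict, hdir, hlq,
      coeff_translate_single_sub_self i (by convert hp using 2; push_cast; ring)]
    funext x
    push_cast
    ring

theorem fdeg_evalRestrict [NoZeroDivisors K] [CharZero K] {p : MvPolynomial σ K} (hp : p ≠ 0) :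
    fdeg (evalRestrict R p) = ((p.totalDegree : ℕ∞) : WithBot ℕ∞) := by
  classical
  refine le_antisymm (fdeg_evalRestrict_le p) ?_
  obtain ⟨m, hm, hdeg⟩ := Finset.exists_mem_eq_sup p.support (support_nonempty.2 hp) (·.degree)
  obtain ⟨l, hl, c, hc, hconst⟩ := exists_multiDisc_evalRestrict_eq_const (R := R) m
    (mem_degreeLT_iff_totalDegree_le.2 (le_of_eq hdeg))
  have hne : multiDisc l (evalRestrict R p) ≠ 0 := fun h =>
    mul_ne_zero (Nat.cast_ne_zero.2 hc) (mem_support_iff.1 hm)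
      (by simpa [hconst] using congrFun h 0)
  rw [show p.totalDegree = m.degree from hdeg, ← hl]
  exact length_le_fdeg hne

end MvPolynomial

theorem fdeg_of_integer_valued_polynomial_general
    (R : Type*) [CommRing R] [IsDomain R] (N : ℕ)
    (f : MvPolynomial (Fin N) (FractionRing R))
    (g : (Fin N → R) → R)
    (hg : ∀ x : Fin N → R, algebraMap R (FractionRing R) (g x) =
      MvPolynomial.eval (fun i => algebraMap R (FractionRing R) (x i)) f) :
    fdeg g ≤ ((f.totalDegree : ℕ∞) : WithBot ℕ∞) ∧
    (CharZero R → f ≠ 0 → fdeg g = ((f.totalDegree : ℕ∞) : WithBot ℕ∞)) := by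
  have hfg : fdeg g = fdeg (MvPolynomial.evalRestrict R f) := by
    rw [← fdeg_comp_addMonoidHom_of_injective (algebraMap R (FractionRing R)).toAddMonoidHom
      (IsFractionRing.injective R _) g]
    exact congrArg fdeg (funext hg)
  rw [hfg]
  exact ⟨MvPolynomial.fdeg_evalRestrict_le f, fun _ hf => MvPolynomial.fdeg_evalRestrict hf⟩

/-- **Functional degree of integer-valued polynomials.** Let `R` be a commutative domain
with fraction field `K`, and let `f ∈ K[t_1, …, t_N]` be integer-valued on `R^N`. If
`g : R^N → R` is the induced function, then `fdeg g ≤ deg f`, with equality when `R` has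
characteristic `0` and `f ≠ 0`. -/
theorem fdeg_of_integer_valued_polynomial
    (R : Type*) [CommRing R] [IsDomain R] (N : ℕ) (hN : 1 ≤ N)
    (f : MvPolynomial (Fin N) (FractionRing R))
    (hint : ∀ x : Fin N → R,
      MvPolynomial.eval (fun i => algebraMap R (FractionRing R) (x i)) f
        ∈ Set.range (algebraMap R (FractionRing R)))
    (g : (Fin N → R) → R)
    (hg : ∀ x : Fin N → R, algebraMap R (FractionRing R) (g x) =
      MvPolynomial.eval (fun i => algebraMap R (FractionRing R) (x i)) f) :
    fdeg g ≤ ((f.totalDegree : ℕ∞) : WithBot ℕ∞) ∧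
    (CharZero R → f ≠ 0 → fdeg g = ((f.totalDegree : ℕ∞) : WithBot ℕ∞)) :=
  fdeg_of_integer_valued_polynomial_general R N f g hg
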